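/- Let T be a finite tree on k+1 ≥ 2 vertices with edge set E(T), let (X, μ) be a probability space, and let K : X × X → [0,∞) be a symmetric measurable kernel. Suppose there exist a measurable set G ⊆ X with μ(G) > 0 and constants 0 < a ≤ b such that a ≤ ∫_G K(x,y) dμ(y) ≤ b for every x ∈ G. Then the multilinear integral ∫_{G^{k+1}} ∏_{(i,j) ∈ E(T)} K(x^i, x^j) dμ(x¹)⋯dμ(x^{k+1}) is bounded below by a^k · μ(G) and above by b^k · μ(G). -/

import Mathlib

/-!
Remove a leaf `v` of the tree, with neighbour `u`. The only factor involving `x v` is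
`K (x u) (x v)`, so integrating out `x v` over `G` first replaces it by
`∫⁻ t in G, K (x u) t ∂μ ∈ [a, b]` and leaves the same integral for the smaller tree.
Induction on the number of vertices, starting from `μ G` for the one-vertex tree.
-/

open MeasureTheory ENNReal
open Finset

lemma Fin.prod_prod_univ_succAbove {M : Type*} [CommMonoid M] {n : ℕ}
    (g : Fin (n + 1) → Fin (n + 1) → M) (v : Fin (n + 1)) :
    ∏ i, ∏ j, g i j = g v v * (∏ j, g v (v.succAbove j) * g (v.succAbove j) v) *
      ∏ i, ∏ j, g (v.succAbove i) (v.succAbove j) := by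
  simp only [Fin.prod_univ_succAbove _ v, prod_mul_distrib, mul_assoc]

section EdgeProd

variable {X M : Type*} [CommMonoid M] {n : ℕ}

def edgeProd (K : X → X → M) (T : SimpleGraph (Fin n)) [DecidableRel T.Adj]
    (x : Fin n → X) : M :=
  ∏ p ∈ univ.filter (fun p : Fin n × Fin n => p.1 < p.2 ∧ T.Adj p.1 p.2), K (x p.1) (x p.2)

lemma edgeProd_eq_prod_prod (K : X → X → M) (T : SimpleGraph (Fin n)) [DecidableRel T.Adj]
    (x : Fin n → X) :
    edgeProd K T x = ∏ i, ∏ j, if i < j ∧ T.Adj i j then K (x i) (x j) else 1 := by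
  rw [edgeProd, prod_filter, Fintype.prod_prod_type]

lemma edgeProd_insertNth_of_leaf {K : X → X → M} (hK : ∀ x y, K x y = K y x)
    {T : SimpleGraph (Fin (n + 1))} [DecidableRel T.Adj] {v : Fin (n + 1)} {m : Fin n}
    (hleaf : ∀ w, T.Adj v w ↔ w = v.succAbove m) (t : X) (x : Fin n → X) :
    edgeProd K T (v.insertNth (α := fun _ => X) t x) =
      K (x m) t * edgeProd K (T.comap v.succAbove) x := by
  have hadj : ∀ j, T.Adj v (v.succAbove j) ↔ j = m := fun j =>
    (hleaf _).trans Fin.succAbove_right_inj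
  rw [edgeProd_eq_prod_prod, Fin.prod_prod_univ_succAbove _ v, edgeProd_eq_prod_prod]
  simp only [lt_irrefl, false_and, if_false, one_mul, Fin.succAbove_lt_succAbove_iff,
    SimpleGraph.comap_adj, Fin.insertNth_apply_same, Fin.insertNth_apply_succAbove]
  congr 1
  refine (prod_congr rfl fun j _ => ?_).trans (Fintype.prod_ite_eq' m fun j => K (x j) t)
  simp only [T.adj_comm _ v, hadj]
  obtain rfl | hj := eq_or_ne j m
  · rcases (v.succAbove_ne j).lt_or_gt with h | h <;> simp [h, h.not_gt, hK t (x j)]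
  · simp [hj]

end EdgeProd

theorem MeasureTheory.setLIntegral_pi_eq_setLIntegral_insertNth {n : ℕ}
    {α : Fin (n + 1) → Type*} [∀ i, MeasurableSpace (α i)] (μ : ∀ i, Measure (α i))
    [∀ i, SigmaFinite (μ i)] (s : ∀ i, Set (α i)) (v : Fin (n + 1)) {f : (∀ i, α i) → ℝ≥0∞}
    (hf : Measurable f) :
    ∫⁻ y in Set.univ.pi s, f y ∂Measure.pi μ =
      ∫⁻ x in Set.univ.pi (fun j => s (v.succAbove j)),
        ∫⁻ t in s v, f (v.insertNth t x) ∂μ v ∂Measure.pi (fun j => μ (v.succAbove j)) := by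
  have he := measurePreserving_piFinSuccAbove μ v
  set e := MeasurableEquiv.piFinSuccAbove α v
  have hpre : Set.univ.pi s = e ⁻¹' (s v ×ˢ Set.univ.pi fun j => s (v.succAbove j)) := by
    ext y
    simp [e, MeasurableEquiv.piFinSuccAbove_apply, Fin.forall_iff_succAbove v, Fin.removeNth]
  conv_lhs => enter [2, y]; rw [← e.symm_apply_apply y]
  rw [hpre, he.setLIntegral_comp_preimage_emb e.measurableEmbedding (fun z => f (e.symm z)),
    ← Measure.prod_restrict,
    lintegral_prod_symm (fun z => f (e.symm z)) (hf.comp e.symm.measurable).aemeasurable]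
  rfl

namespace SimpleGraph

lemma IsTree.comap_succAbove {n : ℕ} {T : SimpleGraph (Fin (n + 1))} (hT : T.IsTree)
    {v : Fin (n + 1)} [Fintype (T.neighborSet v)] (hv : T.degree v = 1) :
    (T.comap v.succAbove).IsTree :=
  (Iso.comap (finSuccAboveEquiv v) (T.induce {v}ᶜ)).isTree_iff.2
    ⟨hT.connected.induce_compl_singleton_of_degree_eq_one hv, hT.isAcyclic.induce _⟩

lemma IsTree.exists_leaf_succAbove {n : ℕ} {T : SimpleGraph (Fin (n + 2))} [DecidableRel T.Adj]
    (hT : T.IsTree) :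
    ∃ v m, (∀ w, T.Adj v w ↔ w = v.succAbove m) ∧ (T.comap v.succAbove).IsTree := by
  obtain ⟨v, hv⟩ := hT.exists_vert_degree_one_of_nontrivial
  obtain ⟨u, hvu, hu⟩ := degree_eq_one_iff_existsUnique_adj.mp hv
  obtain ⟨m, rfl⟩ := Fin.exists_succAbove_eq hvu.ne'
  exact ⟨v, m, fun w => ⟨hu w, fun h => h ▸ hvu⟩, hT.comap_succAbove hv⟩

end SimpleGraph

section TreeIntegral

variable {X : Type*} [MeasurableSpace X] (μ : Measure X) [SigmaFinite μ] {K : X → X → ℝ≥0∞}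

lemma measurable_edgeProd (hK : Measurable (Function.uncurry K)) {n : ℕ}
    (T : SimpleGraph (Fin n)) [DecidableRel T.Adj] : Measurable (edgeProd K T) :=
  Finset.measurable_prod _ fun p _ =>
    hK.comp ((measurable_pi_apply (X := fun _ => X) p.1).prodMk (measurable_pi_apply p.2))

lemma setLIntegral_edgeProd_fin_one (G : Set X) (T : SimpleGraph (Fin 1)) [DecidableRel T.Adj] :
    ∫⁻ x in Set.univ.pi (fun _ => G), edgeProd K T x ∂Measure.pi (fun _ => μ) = μ G := by
  have hT : edgeProd K T = 1 := by
    ext x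
    simp [edgeProd_eq_prod_prod, Subsingleton.elim _ (0 : Fin 1)]
  simp [hT, Measure.pi_pi]

lemma setLIntegral_edgeProd_of_leaf (hK : Measurable (Function.uncurry K))
    (hsym : ∀ x y, K x y = K y x) (G : Set X) {n : ℕ} {T : SimpleGraph (Fin (n + 1))}
    [DecidableRel T.Adj] {v : Fin (n + 1)} {m : Fin n}
    (hleaf : ∀ w, T.Adj v w ↔ w = v.succAbove m) :
    ∫⁻ y in Set.univ.pi (fun _ => G), edgeProd K T y ∂Measure.pi (fun _ => μ) =
      ∫⁻ x in Set.univ.pi (fun _ => G),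
        (∫⁻ t in G, K (x m) t ∂μ) * edgeProd K (T.comap v.succAbove) x
          ∂Measure.pi (fun _ => μ) := by
  rw [setLIntegral_pi_eq_setLIntegral_insertNth _ _ v (measurable_edgeProd hK T)]
  simp_rw [edgeProd_insertNth_of_leaf hsym hleaf]
  refine lintegral_congr fun x => lintegral_mul_const _ ?_
  exact hK.comp (measurable_const.prodMk measurable_id)

lemma pow_mul_le_setLIntegral_edgeProd (hK : Measurable (Function.uncurry K))
    (hsym : ∀ x y, K x y = K y x) {G : Set X} (hG : MeasurableSet G) {a : ℝ≥0∞}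
    (ha : ∀ x ∈ G, a ≤ ∫⁻ y in G, K x y ∂μ) {n : ℕ} (T : SimpleGraph (Fin (n + 1)))
    [DecidableRel T.Adj] (hT : T.IsTree) :
    a ^ n * μ G ≤ ∫⁻ x in Set.univ.pi (fun _ => G), edgeProd K T x ∂Measure.pi (fun _ => μ) := by
  induction n with
  | zero => simp [setLIntegral_edgeProd_fin_one]
  | succ n ih =>
    obtain ⟨v, m, hleaf, hT'⟩ := hT.exists_leaf_succAbove
    rw [setLIntegral_edgeProd_of_leaf μ hK hsym G hleaf]
    calc a ^ (n + 1) * μ G = a * (a ^ n * μ G) := by ring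
      _ ≤ a * ∫⁻ x in Set.univ.pi (fun _ => G), edgeProd K (T.comap v.succAbove) x
            ∂Measure.pi (fun _ => μ) := by gcongr; exact ih _ hT'
      _ = ∫⁻ x in Set.univ.pi (fun _ => G), a * edgeProd K (T.comap v.succAbove) x
            ∂Measure.pi (fun _ => μ) := (lintegral_const_mul a (measurable_edgeProd hK _)).symm
      _ ≤ _ := setLIntegral_mono' (MeasurableSet.univ_pi fun _ => hG) fun x hx =>
            mul_le_mul_left (ha _ (hx m trivial)) _

lemma setLIntegral_edgeProd_le_pow_mul (hK : Measurable (Function.uncurry K))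
    (hsym : ∀ x y, K x y = K y x) {G : Set X} (hG : MeasurableSet G) {b : ℝ≥0∞}
    (hb : ∀ x ∈ G, ∫⁻ y in G, K x y ∂μ ≤ b) {n : ℕ} (T : SimpleGraph (Fin (n + 1)))
    [DecidableRel T.Adj] (hT : T.IsTree) :
    ∫⁻ x in Set.univ.pi (fun _ => G), edgeProd K T x ∂Measure.pi (fun _ => μ) ≤ b ^ n * μ G := by
  induction n with
  | zero => simp [setLIntegral_edgeProd_fin_one]
  | succ n ih =>
    obtain ⟨v, m, hleaf, hT'⟩ := hT.exists_leaf_succAbove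
    rw [setLIntegral_edgeProd_of_leaf μ hK hsym G hleaf]
    calc _ ≤ ∫⁻ x in Set.univ.pi (fun _ => G), b * edgeProd K (T.comap v.succAbove) x
            ∂Measure.pi (fun _ => μ) := setLIntegral_mono' (MeasurableSet.univ_pi fun _ => hG)
              fun x hx => mul_le_mul_left (hb _ (hx m trivial)) _
      _ = b * ∫⁻ x in Set.univ.pi (fun _ => G), edgeProd K (T.comap v.succAbove) x
            ∂Measure.pi (fun _ => μ) := lintegral_const_mul b (measurable_edgeProd hK _)
      _ ≤ b * (b ^ n * μ G) := by gcongr; exact ih _ hT'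
      _ = b ^ (n + 1) * μ G := by ring

end TreeIntegral

theorem stmt9_general {X : Type} [MeasurableSpace X] (μ : Measure X) [IsProbabilityMeasure μ]
    (K : X → X → ℝ≥0∞) (hK : Measurable (Function.uncurry K))
    (hsym : ∀ x y, K x y = K y x)
    (G : Set X) (hG : MeasurableSet G)
    (a b : ℝ≥0∞)
    (hbound : ∀ x ∈ G, a ≤ (∫⁻ y in G, K x y ∂μ) ∧ (∫⁻ y in G, K x y ∂μ) ≤ b)
    (k : ℕ) (T : SimpleGraph (Fin (k + 1))) [DecidableRel T.Adj] (hT : T.IsTree) :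
    a ^ k * μ G ≤
        (∫⁻ x in Set.univ.pi fun _ : Fin (k + 1) => G,
          ∏ p ∈ Finset.univ.filter
              (fun p : Fin (k + 1) × Fin (k + 1) => p.1 < p.2 ∧ T.Adj p.1 p.2),
            K (x p.1) (x p.2) ∂(Measure.pi fun _ : Fin (k + 1) => μ)) ∧
      (∫⁻ x in Set.univ.pi fun _ : Fin (k + 1) => G,
          ∏ p ∈ Finset.univ.filter
              (fun p : Fin (k + 1) × Fin (k + 1) => p.1 < p.2 ∧ T.Adj p.1 p.2),
            K (x p.1) (x p.2) ∂(Measure.pi fun _ : Fin (k + 1) => μ)) ≤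
        b ^ k * μ G :=
  ⟨pow_mul_le_setLIntegral_edgeProd μ hK hsym hG (fun x hx => (hbound x hx).1) T hT,
    setLIntegral_edgeProd_le_pow_mul μ hK hsym hG (fun x hx => (hbound x hx).2) T hT⟩

/-- Tree multilinear bound: if `K` is a nonnegative symmetric kernel with
`a ≤ ∫_G K(x,·) dμ ≤ b` for all `x ∈ G`, then for any tree `T` on `k+1`
vertices, the multilinear integral over `G^{k+1}` of the product of `K` over
the edges of `T` is between `a^k·μ(G)` and `b^k·μ(G)`. -/
theorem stmt9 {X : Type} [MeasurableSpace X] (μ : Measure X) [IsProbabilityMeasure μ]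
    (K : X → X → ℝ≥0∞) (hK : Measurable (Function.uncurry K))
    (hsym : ∀ x y, K x y = K y x)
    (G : Set X) (hG : MeasurableSet G) (hGpos : 0 < μ G)
    (a b : ℝ≥0∞) (ha : 0 < a) (hab : a ≤ b)
    (hbound : ∀ x ∈ G, a ≤ (∫⁻ y in G, K x y ∂μ) ∧ (∫⁻ y in G, K x y ∂μ) ≤ b)
    (k : ℕ) (T : SimpleGraph (Fin (k + 1))) [DecidableRel T.Adj] (hT : T.IsTree) :
    a ^ k * μ G ≤
        (∫⁻ x in Set.univ.pi fun _ : Fin (k + 1) => G,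
          ∏ p ∈ Finset.univ.filter
              (fun p : Fin (k + 1) × Fin (k + 1) => p.1 < p.2 ∧ T.Adj p.1 p.2),
            K (x p.1) (x p.2) ∂(Measure.pi fun _ : Fin (k + 1) => μ)) ∧
      (∫⁻ x in Set.univ.pi fun _ : Fin (k + 1) => G,
          ∏ p ∈ Finset.univ.filter
              (fun p : Fin (k + 1) × Fin (k + 1) => p.1 < p.2 ∧ T.Adj p.1 p.2),
            K (x p.1) (x p.2) ∂(Measure.pi fun _ : Fin (k + 1) => μ)) ≤
        b ^ k * μ G :=
  stmt9_general μ K hK hsym G hG a b hbound k T hT
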